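/- Fix m ≥ 0 and N = 2m + 2. Let A, J, P be N×N complex matrices with P invertible and A = P⁻¹JP. Let q, r : ℤ × ℝ → ℂ and β : ℤ × ℝ → ℂ \ {0} with β² = 1 − qr, and let Φ, Ψ : ℤ × ℝ → ℂᴺ satisfy the matrix system with matrix A: Φ(n+1) = β(n)⁻¹(AΦ(n) + q(n)Ψ(n)), Ψ(n+1) = β(n)⁻¹(r(n)Φ(n) + A⁻¹Ψ(n)), 2∂ₜΦ(n) = (A² − A⁻² + (r(n)q(n−1) − q(n)r(n−1)))Φ(n) + 2(q(n)A + q(n−1)A⁻¹)Ψ(n), 2∂ₜΨ(n) = 2(r(n−1)A + r(n)A⁻¹)Φ(n) + (A⁻² − A² − (r(n)q(n−1) − q(n)r(n−1)))Ψ(n). Then Φ' := PΦ and Ψ' := PΨ satisfy the same matrix system with J in place of A, and the quasi double Casoratians satisfy F(J, Φ', Ψ') = det(P)·F(A, Φ, Ψ), G(J, Φ', Ψ') = det(P)·G(A, Φ, Ψ), H(J, Φ', Ψ') = det(P)·H(A, Φ, Ψ); in particular, wherever F(A,Φ,Ψ) ≠ 0, the ratios G/F and H/F are the same for (J, Φ',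 Ψ') as for (A, Φ, Ψ). -/
import Mathlib


open Matrix

/-- The coupled semi-discrete mKdV system for `q, r : ℤ × ℝ → ℂ`. -/
def CoupledSdMKdV (q r : ℤ × ℝ → ℂ) : Prop :=
  ∀ (n : ℤ) (t : ℝ),
    deriv (fun u => q (n, u)) t = (1 - q (n, t) * r (n, t)) * (q (n + 1, t) - q (n - 1, t)) ∧
    deriv (fun u => r (n, u)) t = (1 - q (n, t) * r (n, t)) * (r (n + 1, t) - r (n - 1, t))

/-- The matrix Lax system (discrete spectral problem plus time evolution) with data
`(A, q, r, β)`. -/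
def MatrixLaxSystem (N : ℕ) (A : Matrix (Fin N) (Fin N) ℂ) (q r β : ℤ × ℝ → ℂ)
    (Φ Ψ : ℤ × ℝ → Fin N → ℂ) : Prop :=
  (∀ (n : ℤ) (t : ℝ),
      Φ (n + 1, t) = (β (n, t))⁻¹ • (A.mulVec (Φ (n, t)) + q (n, t) • Ψ (n, t))) ∧
  (∀ (n : ℤ) (t : ℝ),
      Ψ (n + 1, t) = (β (n, t))⁻¹ • (r (n, t) • Φ (n, t) + A⁻¹.mulVec (Ψ (n, t)))) ∧
  (∀ (n : ℤ) (t : ℝ),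
      (fun i => 2 * deriv (fun u => Φ (n, u) i) t) =
        (A ^ 2 - A⁻¹ ^ 2).mulVec (Φ (n, t))
          + (r (n, t) * q (n - 1, t) - q (n, t) * r (n - 1, t)) • Φ (n, t)
          + (2 : ℂ) • (q (n, t) • A + q (n - 1, t) • A⁻¹).mulVec (Ψ (n, t))) ∧
  (∀ (n : ℤ) (t : ℝ),
      (fun i => 2 * deriv (fun u => Ψ (n, u) i) t) =
        (2 : ℂ) • (r (n - 1, t) • A + r (n, t) • A⁻¹).mulVec (Φ (n, t))
          + (A⁻¹ ^ 2 - A ^ 2).mulVec (Ψ (n, t))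
          - (r (n, t) * q (n - 1, t) - q (n, t) * r (n - 1, t)) • Ψ (n, t))

/-- The quasi double Casoratian `F`:
`F = β^{m+1} · det[Φ(n+1), A²Φ(n+1), …, A^{2m}Φ(n+1); Ψ(n), A²Ψ(n), …, A^{2m}Ψ(n)]`. -/
noncomputable def casF (m : ℕ) (A : Matrix (Fin (2 * m + 2)) (Fin (2 * m + 2)) ℂ)
    (Φ Ψ : ℤ × ℝ → Fin (2 * m + 2) → ℂ) (β : ℤ × ℝ → ℂ) (n : ℤ) (t : ℝ) : ℂ :=
  β (n, t) ^ (m + 1) *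
    Matrix.det (Matrix.of fun (i j : Fin (2 * m + 2)) =>
      if (j : ℕ) ≤ m then (A ^ (2 * (j : ℕ))).mulVec (Φ (n + 1, t)) i
      else (A ^ (2 * ((j : ℕ) - (m + 1)))).mulVec (Ψ (n, t)) i)

/-- The quasi double Casoratian `G`:
`G = β^{m+1} · det[Φ(n), AΦ(n+1), A³Φ(n+1), …, A^{2m+1}Φ(n+1); AΨ(n), A³Ψ(n), …, A^{2m-1}Ψ(n)]`. -/
noncomputable def casG (m : ℕ) (A : Matrix (Fin (2 * m + 2)) (Fin (2 * m + 2)) ℂ)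
    (Φ Ψ : ℤ × ℝ → Fin (2 * m + 2) → ℂ) (β : ℤ × ℝ → ℂ) (n : ℤ) (t : ℝ) : ℂ :=
  β (n, t) ^ (m + 1) *
    Matrix.det (Matrix.of fun (i j : Fin (2 * m + 2)) =>
      if (j : ℕ) = 0 then Φ (n, t) i
      else if (j : ℕ) ≤ m + 1 then (A ^ (2 * (j : ℕ) - 1)).mulVec (Φ (n + 1, t)) i
      else (A ^ (2 * ((j : ℕ) - (m + 1)) - 1)).mulVec (Ψ (n, t)) i)

/-- The quasi double Casoratian `H`:
`H = β^{m+1} · det[AΦ(n+1), A³Φ(n+1), …, A^{2m-1}Φ(n+1); Ψ(n+1), AΨ(n), A³Ψ(n), …, A^{2m+1}Ψ(n)]`. -/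
noncomputable def casH (m : ℕ) (A : Matrix (Fin (2 * m + 2)) (Fin (2 * m + 2)) ℂ)
    (Φ Ψ : ℤ × ℝ → Fin (2 * m + 2) → ℂ) (β : ℤ × ℝ → ℂ) (n : ℤ) (t : ℝ) : ℂ :=
  β (n, t) ^ (m + 1) *
    Matrix.det (Matrix.of fun (i j : Fin (2 * m + 2)) =>
      if (j : ℕ) < m then (A ^ (2 * (j : ℕ) + 1)).mulVec (Φ (n + 1, t)) i
      else if (j : ℕ) = m then Ψ (n + 1, t) i
      else (A ^ (2 * ((j : ℕ) - (m + 1)) + 1)).mulVec (Ψ (n, t)) i)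



set_option linter.unusedSectionVars false
section Aux

variable {n : Type*} [Fintype n] [DecidableEq n]

lemma myConjPow (P B : Matrix n n ℂ) (hP : IsUnit P.det) (k : ℕ) :
    (P * B * P⁻¹) ^ k = P * B ^ k * P⁻¹ := by
  induction k with
  | zero => simp [Matrix.mul_nonsing_inv P hP]
  | succ k ih =>
      rw [pow_succ, ih, pow_succ]
      calc P * B ^ k * P⁻¹ * (P * B * P⁻¹)
          = P * B ^ k * (P⁻¹ * P) * B * P⁻¹ := by
            simp only [Matrix.mul_assoc]
        _ = P * (B ^ k * B) * P⁻¹ := by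
            rw [Matrix.nonsing_inv_mul P hP, Matrix.mul_one]
            simp only [Matrix.mul_assoc]

lemma myConjMulVec (P B : Matrix n n ℂ) (hP : IsUnit P.det) (v : n → ℂ) :
    (P * B * P⁻¹).mulVec (P.mulVec v) = P.mulVec (B.mulVec v) := by
  rw [Matrix.mulVec_mulVec, Matrix.mul_assoc (P * B), Matrix.nonsing_inv_mul P hP,
    Matrix.mul_one, ← Matrix.mulVec_mulVec]

lemma myDerivMulVec (P : Matrix n n ℂ) (f : ℝ → n → ℂ)
    (t : ℝ) (hf : ∀ i, DifferentiableAt ℝ (fun u => f u i) t) (i : n) :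
    deriv (fun u => P.mulVec (f u) i) t =
      P.mulVec (fun k => deriv (fun u => f u k) t) i := by
  simp only [Matrix.mulVec, dotProduct]
  rw [deriv_fun_sum (fun k _ => ((hf k).const_mul _))]
  exact Finset.sum_congr rfl fun k _ => deriv_const_mul _ (hf k)


lemma myDetColMulVec {n : Type*} [Fintype n] [DecidableEq n]
    (P : Matrix n n ℂ) (c : n → n → ℂ) :
    Matrix.det (Matrix.of fun i j => P.mulVec (fun k => c k j) i) =
      P.det * Matrix.det (Matrix.of c) := by
  have h : (Matrix.of fun i j => P.mulVec (fun k => c k j) i) = P * Matrix.of c := by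
    ext i j
    simp [Matrix.mul_apply, Matrix.mulVec, dotProduct]
  rw [h, Matrix.det_mul]

end Aux

/-- Similarity invariance (part of Theorem 1): if `A = P⁻¹JP` then `PΦ, PΨ` solve the
matrix Lax system with `J`, the quasi double Casoratians get multiplied by `det P`, and
the ratios `G/F`, `H/F` are unchanged. -/
theorem casoratians_similarity_invariance
    (m : ℕ) (A J P : Matrix (Fin (2 * m + 2)) (Fin (2 * m + 2)) ℂ)
    (hA : IsUnit A.det) (hP : IsUnit P.det) (hAJP : A = P⁻¹ * J * P)
    (q r β : ℤ × ℝ → ℂ)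
    (hβ0 : ∀ p : ℤ × ℝ, β p ≠ 0)
    (hβ2 : ∀ p : ℤ × ℝ, β p ^ 2 = 1 - q p * r p)
    (Φ Ψ : ℤ × ℝ → Fin (2 * m + 2) → ℂ)
    (hΦd : ∀ (n : ℤ) (t : ℝ) (i : Fin (2 * m + 2)),
        DifferentiableAt ℝ (fun u => Φ (n, u) i) t)
    (hΨd : ∀ (n : ℤ) (t : ℝ) (i : Fin (2 * m + 2)),
        DifferentiableAt ℝ (fun u => Ψ (n, u) i) t)
    (hsys : MatrixLaxSystem (2 * m + 2) A q r β Φ Ψ) :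
    MatrixLaxSystem (2 * m + 2) J q r β
        (fun p => P.mulVec (Φ p)) (fun p => P.mulVec (Ψ p)) ∧
    (∀ (n : ℤ) (t : ℝ),
        casF m J (fun p => P.mulVec (Φ p)) (fun p => P.mulVec (Ψ p)) β n t =
          P.det * casF m A Φ Ψ β n t) ∧
    (∀ (n : ℤ) (t : ℝ),
        casG m J (fun p => P.mulVec (Φ p)) (fun p => P.mulVec (Ψ p)) β n t =
          P.det * casG m A Φ Ψ β n t) ∧
    (∀ (n : ℤ) (t : ℝ),
        casH m J (fun p => P.mulVec (Φ p)) (fun p => P.mulVec (Ψ p)) β n t =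
          P.det * casH m A Φ Ψ β n t) ∧
    (∀ (n : ℤ) (t : ℝ), casF m A Φ Ψ β n t ≠ 0 →
        casG m J (fun p => P.mulVec (Φ p)) (fun p => P.mulVec (Ψ p)) β n t /
            casF m J (fun p => P.mulVec (Φ p)) (fun p => P.mulVec (Ψ p)) β n t =
          casG m A Φ Ψ β n t / casF m A Φ Ψ β n t ∧
        casH m J (fun p => P.mulVec (Φ p)) (fun p => P.mulVec (Ψ p)) β n t /
            casF m J (fun p => P.mulVec (Φ p)) (fun p => P.mulVec (Ψ p)) β n t =
          casH m A Φ Ψ β n t / casF m A Φ Ψ β n t) := by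
  obtain ⟨h1, h2, h3, h4⟩ := hsys
  have hPP : P * P⁻¹ = 1 := Matrix.mul_nonsing_inv P hP
  have hPP' : P⁻¹ * P = 1 := Matrix.nonsing_inv_mul P hP
  have hJ : J = P * A * P⁻¹ := by
    rw [hAJP]
    simp only [Matrix.mul_assoc, hPP, Matrix.mul_one]
    rw [← Matrix.mul_assoc, hPP, Matrix.one_mul]
  have hJinv : J⁻¹ = P * A⁻¹ * P⁻¹ := by
    rw [hJ, Matrix.mul_inv_rev, Matrix.mul_inv_rev,
      Matrix.nonsing_inv_nonsing_inv P hP, ← Matrix.mul_assoc]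
  have keyV : ∀ (B : Matrix (Fin (2 * m + 2)) (Fin (2 * m + 2)) ℂ) (v),
      (P * B * P⁻¹).mulVec (P.mulVec v) = P.mulVec (B.mulVec v) :=
    fun B v => myConjMulVec P B hP v
  have hJpow : ∀ k : ℕ, J ^ k = P * A ^ k * P⁻¹ := fun k => by
    rw [hJ]; exact myConjPow P A hP k
  have hJipow : ∀ k : ℕ, J⁻¹ ^ k = P * A⁻¹ ^ k * P⁻¹ := fun k => by
    rw [hJinv]; exact myConjPow P A⁻¹ hP k
  have hM1 : J ^ 2 - J⁻¹ ^ 2 = P * (A ^ 2 - A⁻¹ ^ 2) * P⁻¹ := by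
    rw [hJpow 2, hJipow 2, ← Matrix.sub_mul, ← Matrix.mul_sub]
  have hM1' : J⁻¹ ^ 2 - J ^ 2 = P * (A⁻¹ ^ 2 - A ^ 2) * P⁻¹ := by
    rw [hJpow 2, hJipow 2, ← Matrix.sub_mul, ← Matrix.mul_sub]
  have hM2 : ∀ a b : ℂ, a • J + b • J⁻¹ = P * (a • A + b • A⁻¹) * P⁻¹ := by
    intro a b
    rw [hJinv, hJ]
    simp only [Matrix.mul_add, Matrix.add_mul, Matrix.mul_smul, Matrix.smul_mul]
  have lhsΦ : ∀ (n : ℤ) (t : ℝ),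
      (fun i => 2 * deriv (fun u => P.mulVec (Φ (n, u)) i) t) =
        P.mulVec (fun i => 2 * deriv (fun u => Φ (n, u) i) t) := by
    intro n t
    funext i
    rw [myDerivMulVec P (fun u => Φ (n, u)) t (fun k => hΦd n t k) i]
    simp [Matrix.mulVec, dotProduct, Finset.mul_sum, mul_left_comm]
  have lhsΨ : ∀ (n : ℤ) (t : ℝ),
      (fun i => 2 * deriv (fun u => P.mulVec (Ψ (n, u)) i) t) =
        P.mulVec (fun i => 2 * deriv (fun u => Ψ (n, u) i) t) := by
    intro n t
    funext i
    rw [myDerivMulVec P (fun u => Ψ (n, u)) t (fun k => hΨd n t k) i]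
    simp [Matrix.mulVec, dotProduct, Finset.mul_sum, mul_left_comm]
  have hF : ∀ (n : ℤ) (t : ℝ),
      casF m J (fun p => P.mulVec (Φ p)) (fun p => P.mulVec (Ψ p)) β n t =
        P.det * casF m A Φ Ψ β n t := by
    intro n t
    unfold casF
    have hcol : (Matrix.of fun (i j : Fin (2 * m + 2)) =>
        if (j : ℕ) ≤ m then (J ^ (2 * (j : ℕ))).mulVec (P.mulVec (Φ (n + 1, t))) i
        else (J ^ (2 * ((j : ℕ) - (m + 1)))).mulVec (P.mulVec (Ψ (n, t))) i) =
        (Matrix.of fun (i j : Fin (2 * m + 2)) => P.mulVec (fun k =>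
            if (j : ℕ) ≤ m then (A ^ (2 * (j : ℕ))).mulVec (Φ (n + 1, t)) k
            else (A ^ (2 * ((j : ℕ) - (m + 1)))).mulVec (Ψ (n, t)) k) i) := by
      ext i j
      simp only [Matrix.of_apply]
      split_ifs with h
      · rw [hJpow, keyV]
      · rw [hJpow, keyV]
    rw [hcol, myDetColMulVec]
    ring
  have hG : ∀ (n : ℤ) (t : ℝ),
      casG m J (fun p => P.mulVec (Φ p)) (fun p => P.mulVec (Ψ p)) β n t =
        P.det * casG m A Φ Ψ β n t := by
    intro n t
    unfold casG
    have hcol : (Matrix.of fun (i j : Fin (2 * m + 2)) =>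
        if (j : ℕ) = 0 then P.mulVec (Φ (n, t)) i
        else if (j : ℕ) ≤ m + 1 then (J ^ (2 * (j : ℕ) - 1)).mulVec (P.mulVec (Φ (n + 1, t))) i
        else (J ^ (2 * ((j : ℕ) - (m + 1)) - 1)).mulVec (P.mulVec (Ψ (n, t))) i) =
        (Matrix.of fun (i j : Fin (2 * m + 2)) => P.mulVec (fun k =>
            if (j : ℕ) = 0 then Φ (n, t) k
            else if (j : ℕ) ≤ m + 1 then (A ^ (2 * (j : ℕ) - 1)).mulVec (Φ (n + 1, t)) k
            else (A ^ (2 * ((j : ℕ) - (m + 1)) - 1)).mulVec (Ψ (n, t)) k) i) := by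
      ext i j
      simp only [Matrix.of_apply]
      split_ifs with h h'
      · rfl
      · rw [hJpow, keyV]
      · rw [hJpow, keyV]
    rw [hcol, myDetColMulVec]
    ring
  have hH : ∀ (n : ℤ) (t : ℝ),
      casH m J (fun p => P.mulVec (Φ p)) (fun p => P.mulVec (Ψ p)) β n t =
        P.det * casH m A Φ Ψ β n t := by
    intro n t
    unfold casH
    have hcol : (Matrix.of fun (i j : Fin (2 * m + 2)) =>
        if (j : ℕ) < m then (J ^ (2 * (j : ℕ) + 1)).mulVec (P.mulVec (Φ (n + 1, t))) i
        else if (j : ℕ) = m then P.mulVec (Ψ (n + 1, t)) i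
        else (J ^ (2 * ((j : ℕ) - (m + 1)) + 1)).mulVec (P.mulVec (Ψ (n, t))) i) =
        (Matrix.of fun (i j : Fin (2 * m + 2)) => P.mulVec (fun k =>
            if (j : ℕ) < m then (A ^ (2 * (j : ℕ) + 1)).mulVec (Φ (n + 1, t)) k
            else if (j : ℕ) = m then Ψ (n + 1, t) k
            else (A ^ (2 * ((j : ℕ) - (m + 1)) + 1)).mulVec (Ψ (n, t)) k) i) := by
      ext i j
      simp only [Matrix.of_apply]
      split_ifs with h h'
      · rw [hJpow, keyV]
      · rfl
      · rw [hJpow, keyV]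
    rw [hcol, myDetColMulVec]
    ring
  have hdet : P.det ≠ 0 := hP.ne_zero
  refine ⟨⟨?_, ?_, ?_, ?_⟩, hF, hG, hH, ?_⟩
  · intro n t
    show P.mulVec (Φ (n + 1, t)) = _
    rw [h1 n t, Matrix.mulVec_smul, Matrix.mulVec_add, Matrix.mulVec_smul, hJ, keyV]
  · intro n t
    show P.mulVec (Ψ (n + 1, t)) = _
    rw [h2 n t, Matrix.mulVec_smul, Matrix.mulVec_add, Matrix.mulVec_smul, hJinv, keyV]
  · intro n t
    show (fun i => 2 * deriv (fun u => P.mulVec (Φ (n, u)) i) t) = _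
    rw [lhsΦ n t, h3 n t]
    simp only [Matrix.mulVec_add, Matrix.mulVec_smul, hM1, hM2, keyV]
  · intro n t
    show (fun i => 2 * deriv (fun u => P.mulVec (Ψ (n, u)) i) t) = _
    rw [lhsΨ n t, h4 n t]
    simp only [Matrix.mulVec_add, Matrix.mulVec_sub, Matrix.mulVec_smul, hM1', hM2, keyV]
  · intro n t hFne
    rw [hF, hG, hH, mul_div_mul_left _ _ hdet, mul_div_mul_left _ _ hdet]
    exact ⟨rfl, rfl⟩
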